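/- arXiv:2201.02375 — 2 statements merged into one kernel-verified Lean document; each statement's English description precedes it below -/
import Mathlib

section
/- Let S be a finite semigroup containing a two-element subsemilattice {0,1} with 0·1 = 1·0 = 0, 0·0 = 0, 1·1 = 1. Let n > |S| + 1, k ∈ {1,...,n}, and let f : S^n → S have the property that every identification minor of f is a term function of S, and suppose f depends on its k-th argument. If moreover it is known (as in Mayr's lemma) that some identification minor f_{ℓm} with ℓ, m ≠ k depends on the k-th argument, then every identification minor f_{ij} with i ≠ k depends on the k-th argument. -/
/-- The product of a nonempty list of semigroup elements (head and tail). -/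
def sprod {S : Type} [Mul S] (a : S) (l : List S) : S :=
  l.foldl (· * ·) a

/-- `f` is an `n`-ary term function of the semigroup `S`, i.e. it is induced by
a nonempty word `v :: l` in the variables. -/
def IsSGTermFun {S : Type} [Semigroup S] {n : ℕ} (f : (Fin n → S) → S) : Prop :=
  ∃ (v : Fin n) (l : List (Fin n)), ∀ x : Fin n → S, f x = sprod (x v) (l.map x)

/-- The identification minor `f_{ij}`: replace the `i`-th argument by the `j`-th. -/
def minor {S : Type} {n : ℕ} (f : (Fin n → S) → S) (i j : Fin n) :
    (Fin n → S) → S :=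
  fun x => f (Function.update x i (x j))

/-- `f` depends on its `k`-th argument. -/
def DependsOnArg {S : Type} {n : ℕ} (f : (Fin n → S) → S) (k : Fin n) : Prop :=
  ∃ a b : Fin n → S, (∀ j : Fin n, j ≠ k → a j = b j) ∧ f a ≠ f b

/-!
On `{z, o}`-valued tuples a semigroup word evaluates to `z` exactly when one of its variables
is sent to `z`. Let `e` be the tuple that is `z` at `k` and `o` elsewhere. Since `f_{ℓm}`
depends on `x_k`, its word contains `x_k`, so `f e = f_{ℓm} e = z`, while `f` of the constant
tuple `o` is `o`; this separates `f_{ij} e` from `f_{ij} o` whenever `j ≠ k`. For `j = k`,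
`f_{ik} e` is `f` at the tuple `b` that is `z` at `i, k` only. Pick `p < q` outside `{i, k}`
(possible as `n ≥ 4`): then `f_{pq} e = f e = z` forces the word of `f_{pq}` to contain a
variable that is `z` under `e`, hence under `b`, so `f b = f_{pq} b = z`.
-/

section Sprod

variable {S : Type} [Semigroup S]

theorem sprod_cons (a b : S) (l : List S) : sprod a (b :: l) = sprod (a * b) l := rfl

theorem sprod_eq_of_forall_eq {e : S} (he : e * e = e) :
    ∀ (a : S) (l : List S), (∀ s ∈ a :: l, s = e) → sprod a l = e
  | a, [], h => h a List.mem_cons_self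
  | a, b :: l, h => by
    have ha : a = e := h a List.mem_cons_self
    have hb : b = e := h b (by simp)
    rw [sprod_cons]
    exact sprod_eq_of_forall_eq he (a * b) l fun s hs => by
      rcases List.mem_cons.mp hs with rfl | hs
      · rw [ha, hb, he]
      · exact h s (by simp [hs])

theorem sprod_eq_z {z o : S} (hz1 : z * o = z) (hz2 : o * z = z) (hz3 : z * z = z)
    (hz4 : o * o = o) :
    ∀ (a : S) (l : List S), (∀ s ∈ a :: l, s = z ∨ s = o) → z ∈ a :: l → sprod a l = z
  | a, [], _, hz => (List.mem_singleton.mp hz).symm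
  | a, b :: l, h, hz => by
    have ha := h a List.mem_cons_self
    have hb := h b (by simp)
    rw [sprod_cons]
    have hab : a * b = z ∨ a * b = o := by
      rcases ha with ha | ha <;> rcases hb with hb | hb <;> simp [ha, hb, hz1, hz2, hz3, hz4]
    have hz' : a * b = z ∨ z ∈ l := by
      rcases List.mem_cons.mp hz with hz | hz
      · left; rcases hb with hb | hb <;> simp [← hz, hb, hz1, hz3]
      rcases List.mem_cons.mp hz with hz | hz
      · left; rcases ha with ha | ha <;> simp [ha, ← hz, hz2, hz3]
      · exact Or.inr hz
    refine sprod_eq_z hz1 hz2 hz3 hz4 (a * b) l (fun s hs => ?_) ?_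
    · rcases List.mem_cons.mp hs with rfl | hs
      · exact hab
      · exact h s (by simp [hs])
    · rcases hz' with hz' | hz'
      · exact hz' ▸ List.mem_cons_self
      · exact List.mem_cons_of_mem _ hz'

theorem sprod_map_eq_z_iff {n : ℕ} {z o : S} (hzo : z ≠ o) (hz1 : z * o = z)
    (hz2 : o * z = z) (hz3 : z * z = z) (hz4 : o * o = o) {x : Fin n → S}
    (hx : ∀ t, x t = z ∨ x t = o) (v : Fin n) (l : List (Fin n)) :
    sprod (x v) (l.map x) = z ↔ ∃ t ∈ v :: l, x t = z := by
  constructor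
  · intro h
    by_contra! hno
    refine hzo (h ▸ sprod_eq_of_forall_eq hz4 _ _ fun s hs => ?_)
    rw [← List.map_cons, List.mem_map] at hs
    obtain ⟨t, ht, rfl⟩ := hs
    exact (hx t).resolve_left (hno t ht)
  · rintro ⟨t, ht, hxt⟩
    refine sprod_eq_z hz1 hz2 hz3 hz4 _ _ (fun s hs => ?_) ?_
    · rw [← List.map_cons, List.mem_map] at hs
      obtain ⟨t, _, rfl⟩ := hs
      exact hx t
    · rw [← List.map_cons, ← hxt]
      exact List.mem_map_of_mem ht

end Sprod

theorem minor_apply_of_eq {S : Type} {n : ℕ} (f : (Fin n → S) → S) {i j : Fin n}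
    {x : Fin n → S} (h : x i = x j) : minor f i j x = f x := by
  rw [minor, Function.update_eq_self_iff.mpr h.symm]

namespace IsSGTermFun

variable {S : Type} [Semigroup S] {n : ℕ} {g : (Fin n → S) → S}

theorem apply_const (hg : IsSGTermFun g) {e : S} (he : e * e = e) : g (fun _ => e) = e := by
  obtain ⟨v, l, hvl⟩ := hg
  rw [hvl]
  refine sprod_eq_of_forall_eq he _ _ fun s hs => ?_
  simp only [List.mem_cons, List.mem_map] at hs
  rcases hs with rfl | ⟨_, _, rfl⟩ <;> rfl

theorem mem_word_of_dependsOnArg {v : Fin n} {l : List (Fin n)}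
    (hvl : ∀ x : Fin n → S, g x = sprod (x v) (l.map x)) {k : Fin n}
    (hd : DependsOnArg g k) : k ∈ v :: l := by
  obtain ⟨a, b, hab, hne⟩ := hd
  by_contra hk
  refine hne ?_
  rw [hvl, hvl, List.map_congr_left fun t ht => hab t fun h => hk (h ▸ List.mem_cons_of_mem v ht),
    hab v fun h => hk (h ▸ List.mem_cons_self)]

variable {z o : S}

theorem apply_eq_z_of_dependsOnArg (hzo : z ≠ o) (hz1 : z * o = z) (hz2 : o * z = z)
    (hz3 : z * z = z) (hz4 : o * o = o) (hg : IsSGTermFun g) {k : Fin n} (hd : DependsOnArg g k)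
    {x : Fin n → S} (hx : ∀ t, x t = z ∨ x t = o) (hxk : x k = z) : g x = z := by
  obtain ⟨v, l, hvl⟩ := hg
  rw [hvl, sprod_map_eq_z_iff hzo hz1 hz2 hz3 hz4 hx]
  exact ⟨k, mem_word_of_dependsOnArg hvl hd, hxk⟩

theorem apply_eq_z_mono (hzo : z ≠ o) (hz1 : z * o = z) (hz2 : o * z = z)
    (hz3 : z * z = z) (hz4 : o * o = o) (hg : IsSGTermFun g) {x y : Fin n → S}
    (hx : ∀ t, x t = z ∨ x t = o) (hy : ∀ t, y t = z ∨ y t = o)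
    (hxy : ∀ t, x t = z → y t = z) (hgx : g x = z) :
    g y = z := by
  obtain ⟨v, l, hvl⟩ := hg
  rw [hvl, sprod_map_eq_z_iff hzo hz1 hz2 hz3 hz4 hx] at hgx
  rw [hvl, sprod_map_eq_z_iff hzo hz1 hz2 hz3 hz4 hy]
  obtain ⟨t, ht, hxt⟩ := hgx
  exact ⟨t, ht, hxy t hxt⟩

end IsSGTermFun

theorem Fin.exists_lt_ne_ne_of_four_le {n : ℕ} (hn : 4 ≤ n) (i k : Fin n) :
    ∃ p q : Fin n, p < q ∧ p ≠ i ∧ p ≠ k ∧ q ≠ i ∧ q ≠ k := by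
  have hcard : 1 < (Finset.univ \ {i, k} : Finset (Fin n)).card := by
    have := Finset.card_le_two (a := i) (b := k)
    rw [Finset.card_sdiff_of_subset (Finset.subset_univ _), Finset.card_univ, Fintype.card_fin]
    omega
  obtain ⟨p, hp, q, hq, hpq⟩ := Finset.one_lt_card.mp hcard
  simp only [Finset.mem_sdiff, Finset.mem_univ, true_and, Finset.mem_insert,
    Finset.mem_singleton, not_or] at hp hq
  rcases hpq.lt_or_gt with h | h
  · exact ⟨p, q, h, hp.1, hp.2, hq.1, hq.2⟩
  · exact ⟨q, p, h, hq.1, hq.2, hp.1, hp.2⟩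

theorem stmt_16_general (S : Type) [Semigroup S] [Fintype S] (z o : S) (hzo : z ≠ o)
    (hz1 : z * o = z) (hz2 : o * z = z) (hz3 : z * z = z) (hz4 : o * o = o)
    (n : ℕ) (hn : Fintype.card S + 1 < n) (k : Fin n)
    (f : (Fin n → S) → S)
    (hminor : ∀ i j : Fin n, i < j → IsSGTermFun (minor f i j))
    (hlm : ∃ ℓ m : Fin n, ℓ < m ∧ ℓ ≠ k ∧ m ≠ k ∧ DependsOnArg (minor f ℓ m) k) :
    ∀ i j : Fin n, i < j → i ≠ k → DependsOnArg (minor f i j) k := by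
  obtain ⟨ℓ, m, hℓm, hℓk, hmk, hdep⟩ := hlm
  have hn4 : 4 ≤ n := by
    have := Fintype.one_lt_card_iff_nontrivial.mpr ⟨z, o, hzo⟩
    omega
  set c : Fin n → S := fun _ => o
  set e : Fin n → S := Function.update c k z with he_def
  have he : ∀ t, e t = z ∨ e t = o := fun t => by
    by_cases ht : t = k <;> simp [he_def, c, ht]
  have hfc : f c = o := minor_apply_of_eq f (x := c) (i := ℓ) (j := m) rfl ▸
    (hminor ℓ m hℓm).apply_const hz4
  have hfe : f e = z := by
    rw [← minor_apply_of_eq f (i := ℓ) (j := m) (by simp [he_def, c, hℓk, hmk])]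
    exact (hminor ℓ m hℓm).apply_eq_z_of_dependsOnArg hzo hz1 hz2 hz3 hz4 hdep he (by simp [e])
  intro i j hij hik
  refine ⟨e, c, fun t ht => by simp [he_def, c, ht], ?_⟩
  rw [minor_apply_of_eq f (x := c) rfl, hfc]
  suffices minor f i j e = z from this ▸ hzo
  by_cases hjk : j = k
  · subst hjk
    obtain ⟨p, q, hpq, hpi, hpj, hqi, hqj⟩ := Fin.exists_lt_ne_ne_of_four_le hn4 i j
    set b := Function.update e i z with hb_def
    have hb : ∀ t, b t = z ∨ b t = o := fun t => by
      by_cases ht : t = i <;> simp [hb_def, ht, he t]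
    rw [minor, show e j = z by simp [he_def], ← hb_def]
    rw [← minor_apply_of_eq f (i := p) (j := q) (by simp [b, e, c, *])]
    refine (hminor p q hpq).apply_eq_z_mono hzo hz1 hz2 hz3 hz4 he hb
      (fun t ht => by by_cases h : t = i <;> simp [hb_def, h, ht]) ?_
    rwa [minor_apply_of_eq f (by simp [c, *])]
  · rw [minor_apply_of_eq f (by simp [he_def, c, hik, hjk]), hfe]

/-- Let `S` be a finite semigroup containing a two-element subsemilattice
`{z, o}` (with `z·o = o·z = z·z = z`, `o·o = o`).  Let `n > |S| + 1`,
`k ∈ {1,…,n}`, let every identification minor of `f : Sⁿ → S` be a term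
function of `S`, and suppose `f` depends on its `k`-th argument.  If moreover
some identification minor `f_{ℓm}` with `ℓ, m ≠ k` depends on the `k`-th
argument, then every identification minor `f_{ij}` with `i ≠ k` depends on the
`k`-th argument. -/
theorem stmt_16 (S : Type) [Semigroup S] [Fintype S] (z o : S) (hzo : z ≠ o)
    (hz1 : z * o = z) (hz2 : o * z = z) (hz3 : z * z = z) (hz4 : o * o = o)
    (n : ℕ) (hn : Fintype.card S + 1 < n) (k : Fin n)
    (f : (Fin n → S) → S)
    (hminor : ∀ i j : Fin n, i < j → IsSGTermFun (minor f i j))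
    (hdep : DependsOnArg f k)
    (hlm : ∃ ℓ m : Fin n, ℓ < m ∧ ℓ ≠ k ∧ m ≠ k ∧ DependsOnArg (minor f ℓ m) k) :
    ∀ i j : Fin n, i < j → i ≠ k → DependsOnArg (minor f i j) k :=
  stmt_16_general S z o hzo hz1 hz2 hz3 hz4 n hn k f hminor hlm
end

section
/- Let S be a monoid with at least 2 elements, n > |S| + 1, and let f : S^n → S be a function all of whose identification minors are term functions of the monoid S, and which depends on its i-th argument. Then there exists e_i ≥ 1 such that the unary function x ↦ f(1,...,1,x,1,...,1) (x in position i) equals the function x ↦ x^{e_i}. -/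
/-! Pigeonhole gives a dependence witness `a, b` (agreeing off `i`) and coordinates `k < l`,
both different from `i`, with `a k = a l`, hence also `b k = b l`. On such points `f` agrees
with its minor `f_{kl}`, which is induced by a word `u`. Since the words evaluated at `a` and
`b` differ, `i` occurs in `u`; evaluating `u` at `(1,…,1,s,1,…,1)` gives `s ^ (u.count i)`. -/

/-- `f` is an `n`-ary term function of the monoid `S`, i.e. it is induced by a
(possibly empty) word in the variables. -/
def IsMonTermFun {S : Type} [Monoid S] {n : ℕ} (f : (Fin n → S) → S) : Prop :=
  ∃ t : List (Fin n), ∀ x : Fin n → S, f x = (t.map x).prod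

/-- `f` depends on its `k`-th argument. -/
def DependsOnCoord {S : Type} {n : ℕ} (f : (Fin n → S) → S) (k : Fin n) : Prop :=
  ∃ a b : Fin n → S, (∀ j : Fin n, j ≠ k → a j = b j) ∧ f a ≠ f b

theorem List.mem_of_prod_map_ne {α M : Type*} [Monoid M] {u : List α} {i : α} {a b : α → M}
    (hab : ∀ j, j ≠ i → a j = b j) (hne : (u.map a).prod ≠ (u.map b).prod) : i ∈ u := by
  contrapose! hne
  exact congrArg List.prod <| List.map_congr_left fun j hj => hab j <| by rintro rfl; exact hne hj

theorem List.prod_map_ite_eq_pow_count {α M : Type*} [Monoid M] [DecidableEq α] (u : List α)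
    (i : α) (s : M) : (u.map fun j => if j = i then s else 1).prod = s ^ u.count i := by
  rw [List.prod_map_eq_pow_single i _ fun j hj _ => if_neg hj, if_pos rfl]

theorem Fintype.exists_lt_ne_ne_apply_eq {α β : Type*} [Fintype α] [LinearOrder α] [Fintype β]
    (hcard : Fintype.card β + 1 < Fintype.card α) (a : α → β) (i : α) :
    ∃ k l, k ≠ i ∧ l ≠ i ∧ k < l ∧ a k = a l := by
  have hcard' : Fintype.card β < Fintype.card {j : α // j ≠ i} := by
    rw [Fintype.card_subtype_compl, Fintype.card_subtype_eq]
    omega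
  obtain ⟨⟨k, hk⟩, ⟨l, hl⟩, hne, heq⟩ :=
    Fintype.exists_ne_map_eq_of_card_lt (fun j : {j : α // j ≠ i} => a j) hcard'
  rcases lt_or_gt_of_ne (Subtype.coe_ne_coe.mpr hne) with hkl | hlk
  · exact ⟨k, l, hk, hl, hkl, heq⟩
  · exact ⟨l, k, hl, hk, hlk, heq.symm⟩

theorem minor_apply_of_apply_eq {S : Type} {n : ℕ} (f : (Fin n → S) → S) {k l : Fin n}
    {x : Fin n → S} (hx : x k = x l) : minor f k l x = f x := by
  rw [minor, ← hx, Function.update_eq_self]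

theorem stmt_17_general (S : Type) [Monoid S] [Fintype S]
    (n : ℕ) (hn : Fintype.card S + 1 < n) (f : (Fin n → S) → S)
    (hminor : ∀ i j : Fin n, i < j → IsMonTermFun (minor f i j))
    (i : Fin n) (hdep : DependsOnCoord f i) :
    ∃ e : ℕ, 1 ≤ e ∧ ∀ s : S, f (fun j => if j = i then s else 1) = s ^ e := by
  obtain ⟨a, b, hab, hfab⟩ := hdep
  obtain ⟨k, l, hk, hl, hkl, ha⟩ :=
    Fintype.exists_lt_ne_ne_apply_eq (by rwa [Fintype.card_fin]) a i
  obtain ⟨u, hu⟩ := hminor k l hkl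
  have hf : ∀ x : Fin n → S, x k = x l → f x = (u.map x).prod := fun x hx => by
    rw [← minor_apply_of_apply_eq f hx, hu]
  have hb : b k = b l := by rw [← hab k hk, ← hab l hl, ha]
  have hiu : i ∈ u := List.mem_of_prod_map_ne hab (by rwa [← hf a ha, ← hf b hb])
  refine ⟨u.count i, List.one_le_count_iff.mpr hiu, fun s => ?_⟩
  rw [hf _ (by simp only [if_neg hk, if_neg hl]), List.prod_map_ite_eq_pow_count]

/-- Let `S` be a monoid with at least 2 elements, `n > |S| + 1`, and let
`f : Sⁿ → S` have all its identification minors term functions of the monoid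
`S` and depend on its `i`-th argument.  Then there is `e ≥ 1` such that the
unary function `x ↦ f(1,…,1,x,1,…,1)` (with `x` in position `i`) is `x ↦ xᵉ`. -/
theorem stmt_17 (S : Type) [Monoid S] [Fintype S] (hS : 2 ≤ Fintype.card S)
    (n : ℕ) (hn : Fintype.card S + 1 < n) (f : (Fin n → S) → S)
    (hminor : ∀ i j : Fin n, i < j → IsMonTermFun (minor f i j))
    (i : Fin n) (hdep : DependsOnCoord f i) :
    ∃ e : ℕ, 1 ≤ e ∧ ∀ s : S, f (fun j => if j = i then s else 1) = s ^ e :=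
  stmt_17_general S n hn f hminor i hdep
end
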